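/- arXiv:0706.0889 — 8 statements merged into one kernel-verified Lean document; each statement's English description precedes it below -/
import Mathlib

section
/- For every k ≥ 2, the cycle of gaps Δ(p_{k+1}) contains at least two entries equal to 2·p_k: there exist integers a and b with 1 ≤ a < b, a + 2·p_k < b, and b + 2·p_k ≤ Π_{k+1}, such that a and a + 2·p_k are both coprime to Π_{k+1} with no integer strictly between them coprime to Π_{k+1}, and likewise b and b + 2·p_k are both coprime to Π_{k+1} with no integer strictly between them coprime to Π_{k+1}. -/
/-- `nthPrime k` is the k-th prime `p_k` (1-indexed: `p_1 = 2`). -/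
noncomputable def nthPrime (k : ℕ) : ℕ := Nat.nth Nat.Prime (k - 1)

/-- `primor k` is the primorial `Π_k = p_1 ⋯ p_k`. -/
noncomputable def primor (k : ℕ) : ℕ := ∏ i ∈ Finset.range k, Nat.nth Nat.Prime i
/-- `a` and `a + g` are consecutive integers coprime to `N`, i.e. `g` is a gap
in the cycle of gaps at `a`. -/
def IsGapAt (N a g : ℕ) : Prop :=
  Nat.Coprime a N ∧ Nat.Coprime (a + g) N ∧
    ∀ m : ℕ, a < m → m < a + g → ¬ Nat.Coprime m N

private lemma P_prime (i : ℕ) : (Nat.nth Nat.Prime i).Prime := Nat.prime_nth_prime i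

private lemma P_lt {i j : ℕ} (h : i < j) : Nat.nth Nat.Prime i < Nat.nth Nat.Prime j :=
  (Nat.nth_lt_nth Nat.infinite_setOf_prime).2 h

private lemma P_pos (i : ℕ) : 0 < Nat.nth Nat.Prime i := (P_prime i).pos

/-- If some enumerated prime with index `< K` divides `m`, then `m` is not coprime
to `primor K`. -/
private lemma not_coprime_primor {m K i : ℕ} (hi : i < K) (hd : Nat.nth Nat.Prime i ∣ m) :
    ¬ Nat.Coprime m (primor K) := by
  intro h
  have hdN : Nat.nth Nat.Prime i ∣ primor K :=
    Finset.dvd_prod_of_mem _ (Finset.mem_range.2 hi)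
  have := Nat.eq_one_of_dvd_coprimes h hd hdN
  exact (P_prime i).one_lt.ne' this

private lemma coprime_primor {m K : ℕ} (h : ∀ i, i < K → ¬ Nat.nth Nat.Prime i ∣ m) :
    Nat.Coprime m (primor K) :=
  Nat.Coprime.prod_right fun i hi =>
    (((P_prime i).coprime_iff_not_dvd).2 (h i (Finset.mem_range.1 hi))).symm

/-- Core lemma: a gap of size `2·p_k` at `c - p_k` in the cycle mod `primor (k+1)`. -/
private lemma gap_core {k c : ℕ} (hk : 2 ≤ k)
    (hsmall : ∀ i, i < k - 1 → Nat.nth Nat.Prime i ∣ c)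
    (hpm : (Nat.nth Nat.Prime (k-1) ∣ c - 1 ∧ Nat.nth Nat.Prime k ∣ c + 1) ∨
           (Nat.nth Nat.Prime (k-1) ∣ c + 1 ∧ Nat.nth Nat.Prime k ∣ c - 1))
    (hc : Nat.nth Nat.Prime (k-1) < c) :
    IsGapAt (primor (k+1)) (c - Nat.nth Nat.Prime (k-1)) (2 * Nat.nth Nat.Prime (k-1)) := by
  set p := Nat.nth Nat.Prime (k-1) with hp
  set q := Nat.nth Nat.Prime k with hq
  have hpq : p < q := P_lt (by omega)
  have hp3 : 3 ≤ p := by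
    have := P_lt (show 0 < k - 1 by omega)
    rw [Nat.nth_prime_zero_eq_two] at this
    omega
  have hpodd : Odd p := (P_prime (k-1)).odd_of_ne_two (by omega)
  have hqodd : Odd q := (P_prime k).odd_of_ne_two (by omega)
  have hq2 : p + 2 ≤ q := by
    rcases hpodd with ⟨s, hs⟩; rcases hqodd with ⟨t, ht⟩; omega
  have hc1 : 1 ≤ c := by omega
  -- dividing p contradicts p ∣ c±1 plus p ∣ c
  have hpc : ¬ p ∣ c := by
    intro hdc
    rcases hpm with ⟨h1, _⟩ | ⟨h1, _⟩
    · have := Nat.dvd_sub hdc h1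
      rw [show c - (c - 1) = 1 by omega] at this
      exact (by omega : ¬ p ≤ 1) (Nat.le_of_dvd one_pos this)
    · have := Nat.dvd_sub h1 hdc
      rw [show c + 1 - c = 1 by omega] at this
      exact (by omega : ¬ p ≤ 1) (Nat.le_of_dvd one_pos this)
  -- endpoints coprime
  have hend : ∀ x : ℕ, (x = c - p ∨ x = c + p) → Nat.Coprime x (primor (k+1)) := by
    intro x hx
    apply coprime_primor
    intro i hik hdvd
    rcases Nat.lt_or_ge i (k-1) with hi | hi
    · -- small prime divides c and x, hence divides p
      have hdc := hsmall i hi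
      have hdp : Nat.nth Nat.Prime i ∣ p := by
        rcases hx with rfl | rfl
        · have := Nat.dvd_sub hdc hdvd
          rwa [show c - (c - p) = p by omega] at this
        · have := Nat.dvd_sub hdvd hdc
          rwa [show c + p - c = p by omega] at this
      have := (Nat.prime_dvd_prime_iff_eq (P_prime i) (P_prime (k-1))).1 hdp
      exact absurd this (Nat.ne_of_lt (P_lt hi))
    · have hi2 : i = k - 1 ∨ i = k := by omega
      rcases hi2 with rfl | rfl
      · -- p divides x implies p divides c
        apply hpc
        rcases hx with rfl | rfl
        · have : c = (c - p) + p := by omega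
          rw [this]; exact Nat.dvd_add hdvd dvd_rfl
        · have := Nat.dvd_sub hdvd (dvd_rfl (a := p))
          rwa [show c + p - p = c by omega] at this
      · -- q divides x; q divides c±1; difference is p∓1 ∈ (0, q)
        rcases hpm with ⟨_, h2⟩ | ⟨_, h2⟩
        · rcases hx with rfl | rfl
          · have := Nat.dvd_sub h2 hdvd
            rw [show c + 1 - (c - p) = p + 1 by omega] at this
            exact absurd (Nat.le_of_dvd (by omega) this) (by omega)
          · have := Nat.dvd_sub hdvd h2
            rw [show c + p - (c + 1) = p - 1 by omega] at this
            exact absurd (Nat.le_of_dvd (by omega) this) (by omega)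
        · rcases hx with rfl | rfl
          · have h3 := Nat.dvd_sub h2 hdvd
            rw [show c - 1 - (c - p) = p - 1 by omega] at h3
            exact absurd (Nat.le_of_dvd (by omega) h3) (by omega)
          · have := Nat.dvd_sub hdvd h2
            rw [show c + p - (c - 1) = p + 1 by omega] at this
            exact absurd (Nat.le_of_dvd (by omega) this) (by omega)
  refine ⟨hend _ (Or.inl rfl), ?_, ?_⟩
  · rw [show c - p + 2 * p = c + p by omega]
    exact hend _ (Or.inr rfl)
  · intro m hm1 hm2 hcop
    rw [show c - p + 2 * p = c + p by omega] at hm2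
    have hk1 : 0 < k - 1 := by omega
    rcases lt_trichotomy m c with hmc | hmc0 | hmc
    · set j := c - m with hj
      have hj1 : 1 ≤ j := by omega
      have hjp : j < p := by omega
      rcases Nat.eq_or_lt_of_le hj1 with hj2 | hj2
      · -- m = c - 1
        have hmeq : m = c - 1 := by omega
        rcases hpm with ⟨h1, _⟩ | ⟨_, h1⟩
        · exact not_coprime_primor (show k - 1 < k + 1 by omega) (hmeq ▸ h1) hcop
        · exact not_coprime_primor (show k < k + 1 by omega) (hmeq ▸ h1) hcop
      · -- j ≥ 2 : minimal prime factor of j is small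
        have hjf : (j.minFac).Prime := Nat.minFac_prime (by omega)
        have hjd : j.minFac ∣ j := Nat.minFac_dvd j
        have hjle : j.minFac < p := lt_of_le_of_lt (Nat.le_of_dvd (by omega) hjd) hjp
        set t := Nat.count Nat.Prime j.minFac with ht
        have hPt : Nat.nth Nat.Prime t = j.minFac := Nat.nth_count hjf
        have htk : t < k - 1 := by
          by_contra hcon
          have : p ≤ Nat.nth Nat.Prime t := by
            rcases Nat.eq_or_lt_of_le (Nat.le_of_not_lt hcon) with h | h
            · rw [← h]
            · exact le_of_lt (P_lt h)
          omega
        have hdm : Nat.nth Nat.Prime t ∣ m := by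
          rw [hPt]
          have h1 : j.minFac ∣ c := hPt ▸ hsmall t htk
          have := Nat.dvd_sub h1 hjd
          rwa [show c - j = m by omega] at this
        exact not_coprime_primor (show t < k + 1 by omega) hdm hcop
    · -- m = c : divisible by 2 = P 0
      have h2c : Nat.nth Nat.Prime 0 ∣ m := hmc0 ▸ hsmall 0 hk1
      exact not_coprime_primor (show 0 < k + 1 by omega) h2c hcop
    · set j := m - c with hj
      have hj1 : 1 ≤ j := by omega
      have hjp : j < p := by omega
      rcases Nat.eq_or_lt_of_le hj1 with hj2 | hj2
      · have hmeq : m = c + 1 := by omega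
        rcases hpm with ⟨_, h1⟩ | ⟨h1, _⟩
        · exact not_coprime_primor (show k < k + 1 by omega) (hmeq ▸ h1) hcop
        · exact not_coprime_primor (show k - 1 < k + 1 by omega) (hmeq ▸ h1) hcop
      · have hjf : (j.minFac).Prime := Nat.minFac_prime (by omega)
        have hjd : j.minFac ∣ j := Nat.minFac_dvd j
        have hjle : j.minFac < p := lt_of_le_of_lt (Nat.le_of_dvd (by omega) hjd) hjp
        set t := Nat.count Nat.Prime j.minFac with ht
        have hPt : Nat.nth Nat.Prime t = j.minFac := Nat.nth_count hjf
        have htk : t < k - 1 := by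
          by_contra hcon
          have : p ≤ Nat.nth Nat.Prime t := by
            rcases Nat.eq_or_lt_of_le (Nat.le_of_not_lt hcon) with h | h
            · rw [← h]
            · exact le_of_lt (P_lt h)
          omega
        have hdm : Nat.nth Nat.Prime t ∣ m := by
          rw [hPt]
          have h1 : j.minFac ∣ c := hPt ▸ hsmall t htk
          have := Nat.dvd_add h1 hjd
          rwa [show c + j = m by omega] at this
        exact not_coprime_primor (show t < k + 1 by omega) hdm hcop

theorem stmt_3 (k : ℕ) (hk : 2 ≤ k) :
    ∃ a b : ℕ, 1 ≤ a ∧ a < b ∧ a + 2 * nthPrime k < b ∧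
      b + 2 * nthPrime k ≤ primor (k + 1) ∧
      IsGapAt (primor (k + 1)) a (2 * nthPrime k) ∧
      IsGapAt (primor (k + 1)) b (2 * nthPrime k) := by
  set p := Nat.nth Nat.Prime (k-1) with hpdef
  set q := Nat.nth Nat.Prime k with hqdef
  have hnth : nthPrime k = p := rfl
  have hpq : p < q := P_lt (by omega)
  have hp3 : 3 ≤ p := by
    have := P_lt (show 0 < k - 1 by omega)
    rw [Nat.nth_prime_zero_eq_two] at this
    omega
  have hppr := P_prime (k-1)
  have hqpr := P_prime k
  set M := primor (k-1) with hMdef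
  set N := primor (k+1) with hNdef
  have hNM : N = M * p * q := by
    rw [hNdef, hMdef, primor, primor, show k + 1 = (k-1) + 1 + 1 by omega,
      Finset.prod_range_succ, Finset.prod_range_succ, show k - 1 + 1 = k by omega]
  -- coprimality of the CRT moduli
  have hcopq : Nat.Coprime p q :=
    (Nat.coprime_primes hppr hqpr).2 (Nat.ne_of_lt hpq)
  have hMco : ∀ r : ℕ, r.Prime → p ≤ r → Nat.Coprime M r := by
    intro r hr hler
    apply Nat.Coprime.prod_left
    intro i hi
    apply (Nat.coprime_primes (P_prime i) hr).2
    have : Nat.nth Nat.Prime i < p := P_lt (Finset.mem_range.1 hi)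
    omega
  have hMpq : Nat.Coprime M (p * q) :=
    Nat.Coprime.mul_right (hMco p hppr le_rfl) (hMco q hqpr (le_of_lt hpq))
  -- CRT: u ≡ 1 mod p, u ≡ q-1 mod q
  obtain ⟨u, hu1, hu2⟩ := Nat.chineseRemainder hcopq 1 (q - 1)
  obtain ⟨c0, hc01, hc02⟩ := Nat.chineseRemainder hMpq 0 u
  set c := c0 % N with hcdef
  have hcc0 : c ≡ c0 [MOD N] := Nat.mod_modEq c0 N
  have hcN : c < N := Nat.mod_lt _ (Finset.prod_pos fun i _ => P_pos i)
  -- residues of c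
  have hsmallc : ∀ i, i < k - 1 → Nat.nth Nat.Prime i ∣ c := by
    intro i hi
    have hdM : Nat.nth Nat.Prime i ∣ M :=
      Finset.dvd_prod_of_mem _ (Finset.mem_range.2 hi)
    have h1 : c ≡ 0 [MOD Nat.nth Nat.Prime i] :=
      ((hcc0.of_dvd (hdM.trans ⟨p * q, by rw [hNM]; ring⟩)).trans
        (hc01.of_dvd hdM))
    exact (Nat.modEq_zero_iff_dvd).1 h1
  have hpdvdN : p ∣ N := ⟨M * q, by rw [hNM]; ring⟩
  have hqdvdN : q ∣ N := ⟨M * p, by rw [hNM]; ring⟩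
  have hcp : c ≡ 1 [MOD p] :=
    (hcc0.of_dvd hpdvdN).trans ((hc02.of_dvd (Dvd.intro q rfl)).trans hu1)
  have hcq : c ≡ q - 1 [MOD q] :=
    (hcc0.of_dvd hqdvdN).trans ((hc02.of_dvd (Dvd.intro_left p rfl)).trans hu2)
  have hcmodp : c % p = 1 := by
    have h := hcp
    unfold Nat.ModEq at h
    rwa [Nat.mod_eq_of_lt (by omega : (1:ℕ) < p)] at h
  have hc1 : 1 ≤ c := by
    rcases Nat.eq_zero_or_pos c with h | h
    · rw [h] at hcmodp; simp at hcmodp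
    · exact h
  have h2c : 2 ∣ c := by
    have := hsmallc 0 (by omega)
    rwa [Nat.nth_prime_zero_eq_two] at this
  have hpc1 : p ∣ c - 1 := (Nat.modEq_iff_dvd' hc1).1 hcp.symm
  have hqc1 : q ∣ c + 1 := by
    have h1 : c + 1 ≡ q - 1 + 1 [MOD q] := hcq.add_right 1
    rw [show q - 1 + 1 = q by omega] at h1
    have h2 : c + 1 ≡ 0 [MOD q] := h1.trans (Nat.modEq_zero_iff_dvd.2 dvd_rfl)
    exact Nat.modEq_zero_iff_dvd.1 h2
  -- c > p
  have hcgtp : p < c := by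
    by_contra hle
    push_neg at hle
    rcases Nat.eq_or_lt_of_le hle with h | h
    · rw [← h, Nat.mod_self] at hcmodp; omega
    · rw [Nat.mod_eq_of_lt h] at hcmodp
      omega
  -- the reflection c' = N - c
  set c' := N - c with hc'def
  have hsmallc' : ∀ i, i < k - 1 → Nat.nth Nat.Prime i ∣ c' := by
    intro i hi
    have hdN : Nat.nth Nat.Prime i ∣ N := by
      have h1 : Nat.nth Nat.Prime i ∣ M :=
        Finset.dvd_prod_of_mem _ (Finset.mem_range.2 hi)
      exact h1.trans ⟨p * q, by rw [hNM]; ring⟩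
    exact Nat.dvd_sub hdN (hsmallc i hi)
  have hpc' : p ∣ c' + 1 := by
    have := Nat.dvd_sub hpdvdN hpc1
    rwa [show N - (c - 1) = c' + 1 by omega] at this
  have hqc' : q ∣ c' - 1 := by
    have := Nat.dvd_sub hqdvdN hqc1
    rwa [show N - (c + 1) = c' - 1 by omega] at this
  have hc'gtp : p < c' := by
    by_contra hle
    push_neg at hle
    have hpdvd := hpc'
    rcases Nat.eq_or_lt_of_le hle with h | h
    · -- c' = p : p ∣ c'+1 and p ∣ c' gives p ∣ 1
      have : p ∣ (c' + 1) - c' := Nat.dvd_sub hpdvd (h ▸ dvd_rfl)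
      simp at this; omega
    · have h1 : p ≤ c' + 1 := Nat.le_of_dvd (by omega) hpdvd
      have h2 : c' + 1 = p := by
        rcases Nat.eq_or_lt_of_le h1 with h' | h'
        · omega
        · exfalso
          have : c' + 1 = p ∨ c' + 1 ≥ 2 * p := by
            rcases hpdvd with ⟨t, ht⟩
            rcases Nat.lt_or_ge t 2 with ht2 | ht2
            · interval_cases t <;> omega
            · right; nlinarith
          omega
      -- c' = p - 1, then q ∣ p - 2 with p - 2 < q
      have h3 : c' - 1 = p - 2 := by omega
      rw [h3] at hqc'
      have := Nat.eq_zero_of_dvd_of_lt hqc' (by omega)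
      omega
  have hc'N : c' < N := by omega
  have hcne : c ≠ c' := by
    intro h
    have h1 : q ∣ c' + 1 := h ▸ hqc1
    have h2 : q ∣ (c' + 1) - (c' - 1) := Nat.dvd_sub h1 hqc'
    rw [show c' + 1 - (c' - 1) = 2 by omega] at h2
    have := Nat.le_of_dvd (by omega) h2
    omega
  -- the two gaps
  have hgap1 : IsGapAt N (c - p) (2 * p) :=
    gap_core hk hsmallc (Or.inl ⟨hpc1, hqc1⟩) hcgtp
  have hgap2 : IsGapAt N (c' - p) (2 * p) :=
    gap_core hk hsmallc' (Or.inr ⟨hpc', hqc'⟩) hc'gtp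
  -- ordering: the smaller one first
  have key : ∀ x y : ℕ, x < y → p < x → p < y → x + y = N →
      IsGapAt N (x - p) (2 * p) → IsGapAt N (y - p) (2 * p) →
      ((p ∣ x - 1 ∧ p ∣ y + 1) ∨ (p ∣ x + 1 ∧ p ∣ y - 1)) →
      x - p + 2 * p < y - p := by
    intro x y hxy hpx hpy hsum hg1 hg2 hside
    by_contra hcon
    push_neg at hcon
    have hyco : Nat.Coprime (y - p) N := hg2.1
    have hylt : y - p ≤ x - p + 2 * p := hcon
    rcases Nat.eq_or_lt_of_le hylt with heq | hlt
    · -- y = x + 2p : contradiction mod p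
      have hxy2 : y = x + 2 * p := by omega
      rcases hside with ⟨h1, h2⟩ | ⟨h1, h2⟩
      · have h3 : p ∣ (y + 1) - (x - 1) := Nat.dvd_sub h2 h1
        rw [show y + 1 - (x - 1) = 2 * p + 2 by omega] at h3
        have h4 : p ∣ 2 := by
          have := Nat.dvd_sub h3 (dvd_mul_left p 2)
          rwa [show 2 * p + 2 - 2 * p = 2 by omega] at this
        have := Nat.le_of_dvd (by omega) h4
        omega
      · have h3 : p ∣ (y - 1) - (x + 1) := Nat.dvd_sub h2 h1
        rw [show y - 1 - (x + 1) = 2 * p - 2 by omega] at h3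
        have h4 : p ∣ 2 := by
          have := Nat.dvd_sub (dvd_mul_left p 2) h3
          rwa [show 2 * p - (2 * p - 2) = 2 by omega] at this
        have := Nat.le_of_dvd (by omega) h4
        omega
    · have := hg1.2.2 (y - p) (by omega) hlt
      exact this hyco
  rw [hnth]
  rcases Nat.lt_or_ge c c' with hlt | hge
  · refine ⟨c - p, c' - p, by omega, ?_, ?_, by omega, hgap1, hgap2⟩
    · have := key c c' hlt hcgtp hc'gtp (by omega) hgap1 hgap2
        (Or.inl ⟨hpc1, hpc'⟩)
      omega
    · exact key c c' hlt hcgtp hc'gtp (by omega) hgap1 hgap2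
        (Or.inl ⟨hpc1, hpc'⟩)
  · have hlt : c' < c := by omega
    refine ⟨c' - p, c - p, by omega, ?_, ?_, by omega, hgap2, hgap1⟩
    · have := key c' c hlt hc'gtp hcgtp (by omega) hgap2 hgap1
        (Or.inr ⟨hpc', hpc1⟩)
      omega
    · exact key c' c hlt hc'gtp hcgtp (by omega) hgap2 hgap1
        (Or.inr ⟨hpc', hpc1⟩)
end

section
/- For every k ≥ 2, there exists an integer x with p_{k+1} < x and x + 2·p_k − 2 ≤ Π_{k+1} such that every one of the 2·p_k − 1 consecutive integers x, x+1, …, x + 2·p_k − 2 is composite (i.e., not equal to 1 and not prime). -/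
private lemma nth_prime_pos (n : ℕ) : 0 < Nat.nth Nat.Prime n :=
  (Nat.prime_nth_prime n).pos

private lemma nth_prime_two_le (n : ℕ) : 2 ≤ Nat.nth Nat.Prime n :=
  (Nat.prime_nth_prime n).two_le

private lemma nth_lt_nth' {m n : ℕ} (h : m < n) :
    Nat.nth Nat.Prime m < Nat.nth Nat.Prime n :=
  (Nat.nth_lt_nth Nat.infinite_setOf_prime).2 h

/-- A prime `q` smaller than the `(n+1)`-st prime (0-indexed `n`) divides `primor n`. -/
private lemma prime_dvd_primor {q n : ℕ} (hq : q.Prime) (hlt : q < Nat.nth Nat.Prime n) :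
    q ∣ primor n := by
  have hqe : Nat.nth Nat.Prime (Nat.count Nat.Prime q) = q := Nat.nth_count hq
  have hcount : Nat.count Nat.Prime q < n := by
    by_contra h
    push_neg at h
    have h2 : Nat.nth Nat.Prime n ≤ Nat.nth Nat.Prime (Nat.count Nat.Prime q) :=
      Nat.nth_monotone Nat.infinite_setOf_prime h
    omega
  have : Nat.nth Nat.Prime (Nat.count Nat.Prime q) ∣ primor n :=
    Finset.dvd_prod_of_mem _ (Finset.mem_range.2 hcount)
  rwa [hqe] at this

private lemma primor_succ (n : ℕ) :
    primor (n + 1) = primor n * Nat.nth Nat.Prime n := by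
  simp [primor, Finset.prod_range_succ]

private lemma primor_pos (n : ℕ) : 0 < primor n :=
  Finset.prod_pos fun i _ => nth_prime_pos i

private lemma two_pow_le_primor (n : ℕ) : 2 ^ n ≤ primor n := by
  have := Finset.pow_card_le_prod (Finset.range n) (fun i => Nat.nth Nat.Prime i) 2
    (fun i _ => nth_prime_two_le i)
  simpa [primor] using this

/-- Bertrand for consecutive primes. -/
private lemma nth_prime_succ_le_two_mul (a : ℕ) :
    Nat.nth Nat.Prime (a + 1) ≤ 2 * Nat.nth Nat.Prime a := by
  obtain ⟨p, hp, hlt, hle⟩ :=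
    Nat.exists_prime_lt_and_le_two_mul (Nat.nth Nat.Prime a) (nth_prime_pos a).ne'
  have hpe : Nat.nth Nat.Prime (Nat.count Nat.Prime p) = p := Nat.nth_count hp
  have hac : a < Nat.count Nat.Prime p := by
    by_contra h
    push_neg at h
    have h2 : Nat.nth Nat.Prime (Nat.count Nat.Prime p) ≤ Nat.nth Nat.Prime a :=
      Nat.nth_monotone Nat.infinite_setOf_prime h
    omega
  have : Nat.nth Nat.Prime (a + 1) ≤ Nat.nth Nat.Prime (Nat.count Nat.Prime p) :=
    Nat.nth_monotone Nat.infinite_setOf_prime hac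
  omega

private lemma coprime_primor_nth {m n : ℕ} (h : m ≤ n) :
    (primor m).Coprime (Nat.nth Nat.Prime n) := by
  apply Nat.Coprime.symm
  apply Nat.Coprime.prod_right
  intro i hi
  rw [Finset.mem_range] at hi
  exact (Nat.coprime_primes (Nat.prime_nth_prime n) (Nat.prime_nth_prime i)).2
    (fun he => absurd he (Nat.ne_of_gt (nth_lt_nth' (lt_of_lt_of_le hi h))))

/-- Main construction, for `k = m + 2` with the size hypothesis. -/
private lemma main_lemma (m : ℕ)
    (hbig : Nat.nth Nat.Prime (m + 2) + Nat.nth Nat.Prime (m + 1) ≤ primor (m + 1)) :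
    ∃ x : ℕ, Nat.nth Nat.Prime (m + 2) < x ∧
      x + (2 * Nat.nth Nat.Prime (m + 1) - 2) ≤ primor (m + 3) ∧
      ∀ i : ℕ, i < 2 * Nat.nth Nat.Prime (m + 1) - 1 → x + i ≠ 1 ∧ ¬ Nat.Prime (x + i) := by
  set P := primor (m + 1) with hP
  set q1 := Nat.nth Nat.Prime (m + 1) with hq1
  set q2 := Nat.nth Nat.Prime (m + 2) with hq2
  have hq1p : q1.Prime := Nat.prime_nth_prime _
  have hq2p : q2.Prime := Nat.prime_nth_prime _
  have hq1q2 : q1 < q2 := nth_lt_nth' (by omega)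
  have hq1two : 2 ≤ q1 := hq1p.two_le
  have hPi : primor (m + 3) = P * q1 * q2 := by
    rw [show m + 3 = (m + 1) + 1 + 1 by ring, primor_succ, primor_succ]
  have hPpos : 0 < P := primor_pos _
  -- coprimalities
  have cop1 : P.Coprime q1 := coprime_primor_nth (by omega)
  have copP2 : P.Coprime q2 := coprime_primor_nth (by omega)
  have cop12 : q1.Coprime q2 :=
    (Nat.coprime_primes hq1p hq2p).2 (Nat.ne_of_lt hq1q2)
  have cop2 : (P * q1).Coprime q2 := Nat.Coprime.mul copP2 cop12
  -- CRT
  obtain ⟨c1, hc1P, hc1q1⟩ := Nat.chineseRemainder cop1 0 1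
  obtain ⟨c2, hc2, hc2q2⟩ := Nat.chineseRemainder cop2 c1 (q2 - 1)
  set N := P * q1 * q2 with hN
  have hNpos : 0 < N := by
    have h2 := nth_prime_pos (m + 1)
    have h3 := nth_prime_pos (m + 2)
    exact Nat.mul_pos (Nat.mul_pos hPpos h2) h3
  set c := c2 % N with hc
  have hcc2 : c ≡ c2 [MOD N] := Nat.mod_modEq c2 N
  have hcP : c ≡ 0 [MOD P] := by
    have h1 : c ≡ c2 [MOD P * q1] := (hcc2).of_dvd (Dvd.intro q2 rfl)
    have h2 : c ≡ c1 [MOD P * q1] := h1.trans hc2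
    exact (h2.of_dvd (Dvd.intro q1 rfl)).trans hc1P
  have hcq1 : c ≡ 1 [MOD q1] := by
    have h1 : c ≡ c2 [MOD P * q1] := (hcc2).of_dvd (Dvd.intro q2 rfl)
    have h2 : c ≡ c1 [MOD P * q1] := h1.trans hc2
    exact (h2.of_dvd (Dvd.intro_left P rfl)).trans hc1q1
  have hcq2 : c ≡ q2 - 1 [MOD q2] := ((hcc2).of_dvd ⟨P * q1, by ring⟩).trans hc2q2
  have hPc : P ∣ c := Nat.modEq_zero_iff_dvd.1 hcP
  have hcne : c ≠ 0 := by
    intro h0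
    have : (0 : ℕ) % q1 = 1 % q1 := by rw [← h0]; exact hcq1
    rw [Nat.zero_mod, Nat.mod_eq_of_lt (by omega)] at this
    omega
  have hclb : P ≤ c := Nat.le_of_dvd (Nat.pos_of_ne_zero hcne) hPc
  have hcltN : c < N := Nat.mod_lt _ hNpos
  have hPN : P ∣ N := ⟨q1 * q2, by ring⟩
  have hcub : c ≤ N - P := by
    have hd : P ∣ N - c := Nat.dvd_sub hPN hPc
    have : P ≤ N - c := Nat.le_of_dvd (by omega) hd
    omega
  set d := q1 - 1 with hd
  have hd1 : 1 ≤ d := by omega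
  have hcd : q2 + d < c := by omega
  refine ⟨c - d, by omega, ?_, ?_⟩
  · rw [hPi]
    have hPq1 : q1 ≤ P := by omega
    have : c - d + (2 * q1 - 2) = c + d := by omega
    omega
  · intro i hi
    have hi' : i ≤ 2 * d := by omega
    -- find a prime divisor q ≤ q2 of c - d + i
    have key : ∃ q : ℕ, q.Prime ∧ q ∣ (c - d + i) ∧ q ≤ q2 := by
      rcases lt_trichotomy i d with hlt | heq | hgt
      · -- value is c - j with j = d - i ∈ [1, d]
        set j := d - i with hj
        have hval : c - d + i = c - j := by omega
        rw [hval]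
        rcases eq_or_lt_of_le (show 1 ≤ j by omega) with h1 | h2
        · -- j = 1 : use q1
          refine ⟨q1, hq1p, ?_, by omega⟩
          have h2 : q1 ∣ c - 1 := (Nat.modEq_iff_dvd' (by omega)).1 hcq1.symm
          exact h1 ▸ h2
        · -- j ≥ 2 : use minFac j
          have hjp : (Nat.minFac j).Prime := Nat.minFac_prime (by omega)
          have hjd : Nat.minFac j ∣ j := Nat.minFac_dvd j
          have hjle : Nat.minFac j ≤ j := Nat.le_of_dvd (by omega) hjd
          have hjq1 : Nat.minFac j < q1 := by omega
          have hdvdP : Nat.minFac j ∣ P := prime_dvd_primor hjp hjq1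
          exact ⟨Nat.minFac j, hjp, Nat.dvd_sub (hdvdP.trans hPc) hjd, by omega⟩
      · -- value is c : use 2
        have h2P : 2 ∣ P := by
          have h2 : (2 : ℕ).Prime := Nat.prime_two
          have : (2 : ℕ) < q1 := by
            have : Nat.nth Nat.Prime 0 < q1 := nth_lt_nth' (by omega)
            have h0 : Nat.nth Nat.Prime 0 = 2 := by
              have := Nat.nth_count (p := Nat.Prime) (n := 2) (by norm_num)
              simpa [Nat.count_eq_card_filter_range] using this
            omega
          exact prime_dvd_primor h2 this
        refine ⟨2, Nat.prime_two, ?_, by omega⟩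
        have : c - d + i = c := by omega
        rw [this]
        exact h2P.trans hPc
      · -- value is c + j with j = i - d ∈ [1, d]
        set j := i - d with hj
        have hval : c - d + i = c + j := by omega
        rw [hval]
        rcases eq_or_lt_of_le (show 1 ≤ j by omega) with h1 | h2
        · -- j = 1 : use q2
          refine ⟨q2, hq2p, ?_, le_refl _⟩
          have h := Nat.ModEq.add_right 1 hcq2
          have hq2' : q2 - 1 + 1 = q2 := by omega
          rw [hq2'] at h
          have : c + 1 ≡ 0 [MOD q2] := h.trans (Nat.modEq_zero_iff_dvd.2 dvd_rfl)
          have h3 := Nat.modEq_zero_iff_dvd.1 this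
          exact h1 ▸ h3
        · -- j ≥ 2 : use minFac j
          have hjtop : j ≤ d := by omega
          have hjp : (Nat.minFac j).Prime := Nat.minFac_prime (by omega)
          have hjd : Nat.minFac j ∣ j := Nat.minFac_dvd j
          have hjle : Nat.minFac j ≤ j := Nat.le_of_dvd (by omega) hjd
          have hjq1 : Nat.minFac j < q1 := by omega
          have hdvdP : Nat.minFac j ∣ P := prime_dvd_primor hjp hjq1
          exact ⟨Nat.minFac j, hjp, Dvd.dvd.add (hdvdP.trans hPc) hjd, by omega⟩
    obtain ⟨q, hqp, hqdvd, hqle⟩ := key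
    have hvbig : q2 < c - d + i := by omega
    have hqlt : q < c - d + i := by omega
    constructor
    · omega
    · intro hvp
      rcases (hvp.eq_one_or_self_of_dvd q hqdvd) with h | h
      · exact hqp.one_lt.ne' h
      · omega

private lemma nth0 : Nat.nth Nat.Prime 0 = 2 := by
  have := Nat.nth_count (p := Nat.Prime) (n := 2) (by norm_num)
  simpa [Nat.count_eq_card_filter_range] using this

private lemma nth1 : Nat.nth Nat.Prime 1 = 3 := by
  have := Nat.nth_count (p := Nat.Prime) (n := 3) (by norm_num)
  rwa [show Nat.count Nat.Prime 3 = 1 by simp [Nat.count_eq_card_filter_range]; decide] at this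

private lemma nth2 : Nat.nth Nat.Prime 2 = 5 := by
  have := Nat.nth_count (p := Nat.Prime) (n := 5) (by norm_num)
  rwa [show Nat.count Nat.Prime 5 = 2 by simp [Nat.count_eq_card_filter_range]; decide] at this

private lemma nth3 : Nat.nth Nat.Prime 3 = 7 := by
  have := Nat.nth_count (p := Nat.Prime) (n := 7) (by norm_num)
  rwa [show Nat.count Nat.Prime 7 = 3 by simp [Nat.count_eq_card_filter_range]; decide] at this

private lemma nth4 : Nat.nth Nat.Prime 4 = 11 := by
  have := Nat.nth_count (p := Nat.Prime) (n := 11) (by norm_num)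
  rwa [show Nat.count Nat.Prime 11 = 4 by simp [Nat.count_eq_card_filter_range]; decide] at this

private lemma primor4 : primor 4 = 210 := by
  have h3 : primor 3 = 30 := by
    simp [primor, Finset.prod_range_succ, nth0, nth1, nth2]
  rw [primor_succ, h3, nth3]

private lemma primor5 : primor 5 = 2310 := by
  rw [primor_succ, primor4, nth4]

theorem stmt_4 (k : ℕ) (hk : 2 ≤ k) :
    ∃ x : ℕ, nthPrime (k + 1) < x ∧ x + (2 * nthPrime k - 2) ≤ primor (k + 1) ∧
      ∀ i : ℕ, i < 2 * nthPrime k - 1 → x + i ≠ 1 ∧ ¬ Nat.Prime (x + i) := by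
  obtain ⟨m, rfl⟩ : ∃ m, k = m + 2 := ⟨k - 2, by omega⟩
  have hP : nthPrime (m + 2 + 1) = Nat.nth Nat.Prime (m + 2) := rfl
  have hP' : nthPrime (m + 2) = Nat.nth Nat.Prime (m + 1) := rfl
  rw [hP, hP', show m + 2 + 1 = m + 3 from rfl]
  match m with
  | 0 =>
    refine ⟨24, ?_, ?_, ?_⟩
    · rw [nth2]; norm_num
    · rw [nth1]
      have : primor 3 = 30 := by simp [primor, Finset.prod_range_succ, nth0, nth1, nth2]
      rw [this]; norm_num
    · rw [nth1]
      intro i hi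
      interval_cases i <;> norm_num
  | 1 =>
    refine ⟨114, ?_, ?_, ?_⟩
    · rw [nth3]; norm_num
    · rw [nth2, primor4]; norm_num
    · rw [nth2]
      intro i hi
      interval_cases i <;> norm_num
  | 2 =>
    refine ⟨114, ?_, ?_, ?_⟩
    · rw [nth4]; norm_num
    · rw [nth3, primor5]; norm_num
    · rw [nth3]
      intro i hi
      interval_cases i <;> norm_num
  | (n + 3) =>
    apply main_lemma
    have b1 : Nat.nth Nat.Prime (n + 3 + 2) ≤ 2 * Nat.nth Nat.Prime (n + 3 + 1) :=
      nth_prime_succ_le_two_mul _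
    have b2 : Nat.nth Nat.Prime (n + 3 + 1) ≤ 2 * Nat.nth Nat.Prime (n + 3) :=
      nth_prime_succ_le_two_mul _
    have hpow : 2 ^ (n + 3) ≤ primor (n + 3) := two_pow_le_primor _
    have h8 : 8 ≤ 2 ^ (n + 3) := by
      calc (8 : ℕ) = 2 ^ 3 := by norm_num
      _ ≤ 2 ^ (n + 3) := Nat.pow_le_pow_right (by norm_num) (by omega)
    have hps : primor (n + 3 + 1) = primor (n + 3) * Nat.nth Nat.Prime (n + 3) :=
      primor_succ _
    have hq0 : 2 ≤ Nat.nth Nat.Prime (n + 3) := nth_prime_two_le _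
    have : 8 * Nat.nth Nat.Prime (n + 3) ≤ primor (n + 3) * Nat.nth Nat.Prime (n + 3) :=
      Nat.mul_le_mul_right _ (by omega)
    omega
end

section
/- Let k ≥ 1, let q be a prime with q ≤ p_k, and let a, g, m be integers with a ≥ 1, g ≥ 1, m ≥ 0. If gcd(a + i·g, Π_k) = 1 for every i = 0, 1, …, m+1, and q ≤ m + 2, then q divides g. (In particular, if m+1 consecutive gaps in Δ(p_k) are all equal to g, then g ≡ 0 mod q for every prime q ≤ min(m+2, p_k).) -/
/-!
Among any `q` consecutive terms of an arithmetic progression whose difference `g` is prime to `q`,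
one is divisible by `q`. If `q ∤ g`, the `m + 2 ≥ q` terms `a, a + g, …, a + (m + 1) g` therefore
contain a multiple of `q`; but `q ≤ p_k` divides `Π_k`, to which all these terms are coprime.
-/

theorem Nat.exists_lt_dvd_add_mul {q g : ℕ} [NeZero q] (hg : g.Coprime q) (a : ℕ) :
    ∃ i < q, q ∣ a + i * g := by
  let u := ZMod.unitOfCoprime g hg
  refine ⟨(-(a : ZMod q) * ↑u⁻¹).val, ZMod.val_lt _, ?_⟩
  rw [← ZMod.natCast_eq_zero_iff]
  push_cast
  rw [ZMod.natCast_zmod_val, show (g : ZMod q) = u from rfl, mul_assoc, Units.inv_mul]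
  ring

theorem prime_dvd_primor_s7 {k q : ℕ} (hk : 1 ≤ k) (hq : q.Prime) (hqk : q ≤ nthPrime k) :
    q ∣ primor k := by
  have hcount : Nat.count Nat.Prime q < k := by
    rw [nthPrime, ← Nat.nth_count hq, Nat.nth_le_nth Nat.infinite_setOfPred_prime] at hqk
    omega
  rw [primor, ← Nat.nth_count hq]
  exact Finset.dvd_prod_of_mem _ (Finset.mem_range.mpr hcount)

theorem stmt_7_general (k : ℕ) (hk : 1 ≤ k) (q : ℕ) (hq : Nat.Prime q) (hqk : q ≤ nthPrime k)
    (a g m : ℕ)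
    (hcop : ∀ i : ℕ, i ≤ m + 1 → Nat.Coprime (a + i * g) (primor k))
    (hqm : q ≤ m + 2) :
    q ∣ g := by
  by_contra hqg
  have : NeZero q := ⟨hq.ne_zero⟩
  obtain ⟨i, hiq, hdvd⟩ := Nat.exists_lt_dvd_add_mul (hq.coprime_iff_not_dvd.2 hqg).symm a
  have hcop_q : q.Coprime (primor k) := (hcop i (by omega)).coprime_dvd_left hdvd
  exact hq.ne_one (hcop_q.eq_one_of_dvd (prime_dvd_primor_s7 hk hq hqk))

theorem stmt_7 (k : ℕ) (hk : 1 ≤ k) (q : ℕ) (hq : Nat.Prime q) (hqk : q ≤ nthPrime k)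
    (a g m : ℕ) (ha : 1 ≤ a) (hg : 1 ≤ g)
    (hcop : ∀ i : ℕ, i ≤ m + 1 → Nat.Coprime (a + i * g) (primor k))
    (hqm : q ≤ m + 2) :
    q ∣ g :=
  stmt_7_general k hk q hq hqk a g m hcop hqm
end

section
/- For every k ≥ 2 and every integer m with 1 ≤ m < 2·p_{k+1}, one has gcd(Π_k/2 + m, Π_k) = 1 if and only if m = 2^i for some integer i ≥ 1. (This describes the constellation of powers of 2 in the middle of the cycle of gaps Δ(p_k).) -/
theorem stmt_8 (k : ℕ) (hk : 2 ≤ k) (m : ℕ) (hm1 : 1 ≤ m)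
    (hm2 : m < 2 * nthPrime (k + 1)) :
    Nat.Coprime (primor k / 2 + m) (primor k) ↔ ∃ i : ℕ, 1 ≤ i ∧ m = 2 ^ i := by
  have hinf : {p | Nat.Prime p}.Infinite := Nat.infinite_setOf_prime
  set Q := ∏ i ∈ Finset.Ico 1 k, Nat.nth Nat.Prime i with hQdef
  have hsplit : primor k = 2 * Q := by
    rw [primor, Finset.range_eq_Ico,
      Finset.prod_eq_prod_Ico_succ_bot (by omega : 0 < k), Nat.nth_prime_zero_eq_two]
  have hQodd : ¬ 2 ∣ Q := by
    intro h
    obtain ⟨a, ha, hda⟩ := (Nat.prime_two.prime.dvd_finset_prod_iff _).1 h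
    have hpa : Nat.Prime (Nat.nth Nat.Prime a) := Nat.prime_nth_prime a
    have h2 : Nat.nth Nat.Prime a = 2 :=
      ((Nat.prime_dvd_prime_iff_eq Nat.prime_two hpa).1 hda).symm
    have := (Nat.nth_lt_nth hinf).2
      (show 0 < a from lt_of_lt_of_le one_pos (Finset.mem_Ico.1 ha).1)
    rw [Nat.nth_prime_zero_eq_two, h2] at this
    omega
  have hQmod : Q % 2 = 1 := by omega
  have hdiv : primor k / 2 = Q := by omega
  rw [hdiv, hsplit, Nat.coprime_mul_iff_right]
  have hnthk : nthPrime (k + 1) = Nat.nth Nat.Prime k := rfl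
  constructor
  · rintro ⟨h2, hQ⟩
    have h2' : ¬ 2 ∣ (Q + m) :=
      (Nat.Prime.coprime_iff_not_dvd Nat.prime_two).1 (Nat.coprime_comm.mp h2)
    have hmeven : 2 ∣ m := by omega
    have hmQ : Nat.Coprime m Q := by
      have : Nat.Coprime (m + Q) Q := by rwa [Nat.add_comm] at hQ
      rwa [Nat.coprime_add_self_left] at this
    set i := m.factorization 2 with hi
    set t := m / 2 ^ i with ht
    have hm0 : m ≠ 0 := by omega
    have hmt : m = 2 ^ i * t := (Nat.ordProj_mul_ordCompl_eq_self m 2).symm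
    have htodd : ¬ 2 ∣ t := Nat.not_dvd_ordCompl Nat.prime_two hm0
    have hi1 : 1 ≤ i := by
      rw [hi, ← Nat.Prime.dvd_iff_one_le_factorization Nat.prime_two hm0]
      exact hmeven
    have ht1 : t = 1 := by
      by_contra htne
      have ht0 : t ≠ 0 := by
        intro h0; rw [h0, mul_zero] at hmt; omega
      set q := t.minFac with hq
      have hqp : Nat.Prime q := Nat.minFac_prime htne
      have hqt : q ∣ t := Nat.minFac_dvd t
      have hqm : q ∣ m := hqt.trans ⟨2 ^ i, by rw [hmt]; ring⟩
      have hqodd : q ≠ 2 := by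
        intro h; rw [h] at hqt; exact htodd hqt
      rcases lt_or_ge q (Nat.nth Nat.Prime k) with hlt | hge
      · have hj : Nat.nth Nat.Prime (Nat.count Nat.Prime q) = q := Nat.nth_count hqp
        set j := Nat.count Nat.Prime q with hjdef
        have hjk : j < k := by
          by_contra hjk
          have hle : Nat.nth Nat.Prime k ≤ Nat.nth Nat.Prime j :=
            (Nat.nth_le_nth hinf).2 (show k ≤ j by omega)
          omega
        have hj1 : 1 ≤ j := by
          by_contra hj1
          have hz : j = 0 := by omega
          rw [hz, Nat.nth_prime_zero_eq_two] at hj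
          exact hqodd hj.symm
        have hqQ : q ∣ Q := by
          rw [← hj]
          exact Finset.dvd_prod_of_mem _ (Finset.mem_Ico.2 ⟨hj1, hjk⟩)
        have := Nat.Coprime.eq_one_of_dvd (Nat.Coprime.coprime_dvd_left hqm hmQ) hqQ
        exact hqp.one_lt.ne' this
      · have h2q : 2 * q ≤ m := by
          have hti : q ≤ t := Nat.minFac_le (Nat.pos_of_ne_zero ht0)
          have h2i : 2 ≤ 2 ^ i := by
            calc 2 = 2 ^ 1 := rfl
            _ ≤ 2 ^ i := Nat.pow_le_pow_right (by norm_num) hi1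
          calc 2 * q ≤ 2 ^ i * t := Nat.mul_le_mul h2i hti
          _ = m := hmt.symm
        rw [hnthk] at hm2
        omega
    exact ⟨i, hi1, by rw [hmt, ht1, mul_one]⟩
  · rintro ⟨i, hi1, rfl⟩
    have hQ2 : Nat.Coprime 2 Q :=
      (Nat.Prime.coprime_iff_not_dvd Nat.prime_two).2 hQodd
    constructor
    · have h2i : 2 ∣ 2 ^ i := dvd_pow_self 2 (by omega)
      refine Nat.coprime_comm.mp ((Nat.Prime.coprime_iff_not_dvd Nat.prime_two).2 ?_)
      intro h
      exact hQodd (by omega)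
    · rw [Nat.add_comm, Nat.coprime_add_self_left]
      exact Nat.Coprime.pow_left i hQ2
end

section
/- For every k ≥ 2, the number of gaps equal to 2 in the cycle of gaps Δ(p_k) equals the number of gaps equal to 4: the number of integers c with 1 ≤ c ≤ Π_k such that c and c + 2 are both coprime to Π_k and no integer strictly between them is coprime to Π_k equals the number of integers c with 1 ≤ c ≤ Π_k such that c and c + 4 are both coprime to Π_k and no integer strictly between them is coprime to Π_k. -/
lemma coprime_of_modEq {a b n : ℕ} (h : a ≡ b [MOD n]) (hb : Nat.Coprime b n) :
    Nat.Coprime a n := by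
  have h1 : Nat.gcd n a = Nat.gcd n b := by
    rw [Nat.gcd_rec, Nat.gcd_rec n b, h]
  have hb' : Nat.gcd b n = 1 := hb
  unfold Nat.Coprime
  rw [Nat.gcd_comm, h1, Nat.gcd_comm]
  exact hb'

lemma not_dvd_of_coprime {p c N : ℕ} (hp : 2 ≤ p) (hpN : p ∣ N) (h : Nat.Coprime c N) :
    ¬ p ∣ c := by
  intro hpc
  have h1 : p ∣ Nat.gcd c N := Nat.dvd_gcd hpc hpN
  have h2 : Nat.gcd c N = 1 := h
  rw [h2] at h1
  have := Nat.le_of_dvd one_pos h1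
  omega

lemma three_dvd_middle {c m : ℕ} (h1 : ¬ 3 ∣ c) (h2 : ¬ 3 ∣ (c + 4)) (hm : m = c + 2) :
    3 ∣ m := by omega

/-- The auxiliary map: multiply by `u` mod `M`, then pick the odd representative in `[1, 2M]`. -/
def Gmap (M u c : ℕ) : ℕ := if (u * c) % M % 2 = 1 then (u * c) % M else (u * c) % M + M

lemma Gmap_modEq (M u c : ℕ) : Gmap M u c ≡ u * c [MOD M] := by
  unfold Gmap
  split
  · exact Nat.mod_modEq _ _
  · calc (u * c) % M + M ≡ (u * c) % M + 0 [MOD M] :=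
          Nat.ModEq.add_left _ (Nat.modEq_zero_iff_dvd.mpr dvd_rfl)
      _ = (u * c) % M := by omega
      _ ≡ u * c [MOD M] := Nat.mod_modEq _ _

lemma Gmap_odd {M : ℕ} (hM : M % 2 = 1) (u c : ℕ) : Gmap M u c % 2 = 1 := by
  unfold Gmap
  split <;> omega

lemma Gmap_bounds {M : ℕ} (hM : 0 < M) (u c : ℕ) :
    1 ≤ Gmap M u c ∧ Gmap M u c ≤ 2 * M := by
  have h := Nat.mod_lt (u * c) hM
  unfold Gmap
  split <;> omega

lemma odd_of_coprime {c M : ℕ} (h : Nat.Coprime c (2 * M)) : c % 2 = 1 := by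
  have h2 : Nat.Coprime c 2 := h.coprime_dvd_right ⟨M, rfl⟩
  exact Nat.odd_iff.mp (Nat.coprime_two_right.mp h2)

/-- key counting lemma. -/
lemma key (M u d d' : ℕ) (hMpos : 0 < M) (hModd : M % 2 = 1)
    (hu : Nat.Coprime u M) (hd' : d' % 2 = 0)
    (hcong : u * d ≡ d' [MOD M]) :
    {c : ℕ | 1 ≤ c ∧ c ≤ 2 * M ∧ Nat.Coprime c (2 * M) ∧ Nat.Coprime (c + d) (2 * M)}.ncard ≤
    {c : ℕ | 1 ≤ c ∧ c ≤ 2 * M ∧ Nat.Coprime c (2 * M) ∧ Nat.Coprime (c + d') (2 * M)}.ncard := by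
  have hTfin : {c : ℕ | 1 ≤ c ∧ c ≤ 2 * M ∧ Nat.Coprime c (2 * M) ∧
      Nat.Coprime (c + d') (2 * M)}.Finite :=
    Set.Finite.subset (Set.finite_Icc 1 (2 * M))
      (fun c hc => Set.mem_Icc.mpr ⟨hc.1, hc.2.1⟩)
  apply Set.ncard_le_ncard_of_injOn (Gmap M u) _ _ hTfin
  · -- maps to
    rintro c ⟨hc1, hc2, hcop, hcopd⟩
    have hbd := Gmap_bounds hMpos u c
    have hodd := Gmap_odd hModd u c
    have hcopM : Nat.Coprime c M := Nat.Coprime.coprime_dvd_right ⟨2, by ring⟩ hcop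
    have hcopdM : Nat.Coprime (c + d) M := Nat.Coprime.coprime_dvd_right ⟨2, by ring⟩ hcopd
    have hcop2 : Nat.Coprime (Gmap M u c) 2 := by
      rw [Nat.coprime_two_right]
      exact Nat.odd_iff.mpr hodd
    have hcopGM : Nat.Coprime (Gmap M u c) M :=
      coprime_of_modEq (Gmap_modEq M u c) (Nat.Coprime.mul hu hcopM)
    have hcopG2 : Nat.Coprime (Gmap M u c + d') 2 := by
      rw [Nat.coprime_two_right, Nat.odd_iff]
      omega
    have hcopGdM : Nat.Coprime (Gmap M u c + d') M := by
      have hmod : Gmap M u c + d' ≡ u * (c + d) [MOD M] := by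
        calc Gmap M u c + d' ≡ u * c + d' [MOD M] := (Gmap_modEq M u c).add_right d'
          _ ≡ u * c + u * d [MOD M] := (Nat.ModEq.refl _).add hcong.symm
          _ = u * (c + d) := by ring
      exact coprime_of_modEq hmod (Nat.Coprime.mul hu hcopdM)
    refine ⟨hbd.1, hbd.2, ?_, ?_⟩
    · have := Nat.Coprime.mul_right hcop2 hcopGM
      simpa using this
    · have := Nat.Coprime.mul_right hcopG2 hcopGdM
      simpa using this
  · -- injective
    rintro a ⟨ha1, ha2, hacop, -⟩ b ⟨hb1, hb2, hbcop, -⟩ hab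
    have haodd : a % 2 = 1 := odd_of_coprime hacop
    have hbodd : b % 2 = 1 := odd_of_coprime hbcop
    have h1 : u * a ≡ u * b [MOD M] :=
      ((Gmap_modEq M u a).symm.trans (hab ▸ Gmap_modEq M u b))
    have h2 : a ≡ b [MOD M] := Nat.ModEq.cancel_left_of_coprime (by
      have : Nat.gcd u M = 1 := hu
      rw [Nat.gcd_comm] at this
      exact this) h1
    have h3 : a ≡ b [MOD 2] := by unfold Nat.ModEq; omega
    have hco2M : Nat.Coprime 2 M := Nat.coprime_two_left.mpr (Nat.odd_iff.mpr hModd)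
    have h4 : a ≡ b [MOD 2 * M] := (Nat.modEq_and_modEq_iff_modEq_mul hco2M).mp ⟨h3, h2⟩
    have hane : a ≠ 2 * M := by
      intro h
      subst h
      have h := hacop
      unfold Nat.Coprime at h
      rw [Nat.gcd_self] at h
      omega
    have hbne : b ≠ 2 * M := by
      intro h
      subst h
      have h := hbcop
      unfold Nat.Coprime at h
      rw [Nat.gcd_self] at h
      omega
    have ha' : a < 2 * M := lt_of_le_of_ne ha2 hane
    have hb' : b < 2 * M := lt_of_le_of_ne hb2 hbne
    have : a % (2 * M) = b % (2 * M) := h4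
    rwa [Nat.mod_eq_of_lt ha', Nat.mod_eq_of_lt hb'] at this

theorem stmt_12 (k : ℕ) (hk : 2 ≤ k) :
    {c : ℕ | 1 ≤ c ∧ c ≤ primor k ∧ Nat.Coprime c (primor k) ∧
        Nat.Coprime (c + 2) (primor k) ∧
        ∀ m : ℕ, c < m → m < c + 2 → ¬ Nat.Coprime m (primor k)}.ncard =
    {c : ℕ | 1 ≤ c ∧ c ≤ primor k ∧ Nat.Coprime c (primor k) ∧
        Nat.Coprime (c + 4) (primor k) ∧
        ∀ m : ℕ, c < m → m < c + 4 → ¬ Nat.Coprime m (primor k)}.ncard := by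
  set M : ℕ := ∏ i ∈ (Finset.range k).erase 0, Nat.nth Nat.Prime i with hM
  have h0mem : (0 : ℕ) ∈ Finset.range k := Finset.mem_range.mpr (by omega)
  have h1mem : (1 : ℕ) ∈ Finset.range k := Finset.mem_range.mpr (by omega)
  have hNM : primor k = 2 * M := by
    rw [primor, ← Finset.mul_prod_erase (Finset.range k) _ h0mem,
      Nat.nth_prime_zero_eq_two]
  have hModd : M % 2 = 1 := by
    rcases Nat.even_or_odd M with he | ho
    · exfalso
      obtain ⟨i, hi, hdvd⟩ := (Nat.prime_iff.mp Nat.prime_two).exists_mem_finset_dvd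
        (hM ▸ he.two_dvd)
      have hip : (Nat.nth Nat.Prime i).Prime := Nat.prime_nth_prime i
      have : 2 = Nat.nth Nat.Prime i :=
        ((Nat.prime_dvd_prime_iff_eq Nat.prime_two hip).mp hdvd)
      have : Nat.nth Nat.Prime 0 = Nat.nth Nat.Prime i := by
        rw [Nat.nth_prime_zero_eq_two]; exact this
      have hi0 : (0 : ℕ) = i := Nat.nth_injective Nat.infinite_setOf_prime this
      exact (Finset.mem_erase.mp hi).1 hi0.symm
    · exact Nat.odd_iff.mp ho
  have hMpos : 0 < M := by
    apply Finset.prod_pos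
    intro i _
    exact (Nat.prime_nth_prime i).pos
  have h2N : 2 ∣ primor k := ⟨M, hNM⟩
  have h3N : 3 ∣ primor k := by
    rw [primor, ← Nat.nth_prime_one_eq_three]
    exact Finset.dvd_prod_of_mem _ h1mem
  have hA : {c : ℕ | 1 ≤ c ∧ c ≤ primor k ∧ Nat.Coprime c (primor k) ∧
        Nat.Coprime (c + 2) (primor k) ∧
        ∀ m : ℕ, c < m → m < c + 2 → ¬ Nat.Coprime m (primor k)} =
      {c : ℕ | 1 ≤ c ∧ c ≤ 2 * M ∧ Nat.Coprime c (2 * M) ∧ Nat.Coprime (c + 2) (2 * M)} := by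
    rw [← hNM]
    ext c
    simp only [Set.mem_setOf_eq]
    constructor
    · rintro ⟨h1, h2, h3, h4, -⟩; exact ⟨h1, h2, h3, h4⟩
    · rintro ⟨h1, h2, h3, h4⟩
      refine ⟨h1, h2, h3, h4, ?_⟩
      intro m hm1 hm2 hmcop
      have hmeq : m = c + 1 := by omega
      have hcodd : ¬ 2 ∣ c := not_dvd_of_coprime (by omega) h2N h3
      have hmodd : ¬ 2 ∣ m := not_dvd_of_coprime (by omega) h2N hmcop
      omega
  have hB : {c : ℕ | 1 ≤ c ∧ c ≤ primor k ∧ Nat.Coprime c (primor k) ∧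
        Nat.Coprime (c + 4) (primor k) ∧
        ∀ m : ℕ, c < m → m < c + 4 → ¬ Nat.Coprime m (primor k)} =
      {c : ℕ | 1 ≤ c ∧ c ≤ 2 * M ∧ Nat.Coprime c (2 * M) ∧ Nat.Coprime (c + 4) (2 * M)} := by
    rw [← hNM]
    ext c
    simp only [Set.mem_setOf_eq]
    constructor
    · rintro ⟨h1, h2, h3, h4, -⟩; exact ⟨h1, h2, h3, h4⟩
    · rintro ⟨h1, h2, h3, h4⟩
      refine ⟨h1, h2, h3, h4, ?_⟩
      intro m hm1 hm2 hmcop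
      have hcodd : ¬ 2 ∣ c := not_dvd_of_coprime (by omega) h2N h3
      have hmodd : ¬ 2 ∣ m := not_dvd_of_coprime (by omega) h2N hmcop
      have hc3 : ¬ 3 ∣ c := not_dvd_of_coprime (by omega) h3N h3
      have hc43 : ¬ 3 ∣ (c + 4) := not_dvd_of_coprime (by omega) h3N h4
      have hm3 : ¬ 3 ∣ m := not_dvd_of_coprime (by omega) h3N hmcop
      have hmeq : m = c + 2 := by omega
      exact hm3 (three_dvd_middle hc3 hc43 hmeq)
  rw [hA, hB]
  apply le_antisymm
  · exact key M 2 2 4 hMpos hModd (Nat.coprime_two_left.mpr (Nat.odd_iff.mpr hModd))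
      (by norm_num) (by norm_num [Nat.ModEq])
  · have h2u : 2 * ((M + 1) / 2) = M + 1 := by omega
    have hu : Nat.Coprime ((M + 1) / 2) M := by
      have hg1 : Nat.gcd ((M + 1) / 2) M ∣ M + 1 :=
        (Nat.gcd_dvd_left _ _).trans ⟨2, by omega⟩
      have hg2 : Nat.gcd ((M + 1) / 2) M ∣ M := Nat.gcd_dvd_right _ _
      have : Nat.gcd ((M + 1) / 2) M ∣ 1 := by
        have := Nat.dvd_sub hg1 hg2
        simpa using this
      exact Nat.dvd_one.mp this
    have hcong : (M + 1) / 2 * 4 ≡ 2 [MOD M] := by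
      have heq : (M + 1) / 2 * 4 = 2 * M + 2 := by omega
      rw [heq]
      calc 2 * M + 2 ≡ 0 + 2 [MOD M] :=
            Nat.ModEq.add_right 2 (Nat.modEq_zero_iff_dvd.mpr ⟨2, mul_comm 2 M⟩)
        _ = 2 := by omega
    exact key M ((M + 1) / 2) 4 2 hMpos hModd hu (by norm_num) hcong
end

section
/- Let k ≥ 2 and let s = (a_1, …, a_j) be a finite sequence of positive integers, j ≥ 1, that occurs in the cycle of gaps Δ(p_k) and satisfies a_1 + ⋯ + a_j < 2·p_{k+1}. Then N(p_{k+1}, s) ≥ (p_{k+1} − (j+1))·N(p_k, s). (Hence the number of copies of any constellation of j gaps grows at least by the factors (p − j − 1) at each stage of the sieve.) -/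
/-- The constellation (list of gaps) `s` occurs at `c` in the cycle of gaps modulo `N`:
the successive partial sums `c, c + a₁, c + a₁ + a₂, …` are all coprime to `N` and no
integer strictly between two consecutive of them is coprime to `N`. -/
def OccursAt (N : ℕ) : List ℕ → ℕ → Prop
  | [], c => Nat.Coprime c N
  | a :: t, c => Nat.Coprime c N ∧ (∀ m : ℕ, c < m → m < c + a → ¬ Nat.Coprime m N) ∧
      OccursAt N t (c + a)

/-- The constellation `s` occurs (somewhere) in the cycle of gaps modulo `N`. -/
def Occurs (N : ℕ) (s : List ℕ) : Prop := ∃ c : ℕ, 1 ≤ c ∧ OccursAt N s c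

/-- `Ncount k s` is `N(p_k, s)`: the number of positions `c` in the fundamental cycle
`[1, Π_k]` at which the constellation `s` occurs in the cycle of gaps `Δ(p_k)`. -/
noncomputable def Ncount (k : ℕ) (s : List ℕ) : ℕ :=
  {c : ℕ | 1 ≤ c ∧ c ≤ primor k ∧ OccursAt (primor k) s c}.ncard

def nodes : List ℕ → ℕ → List ℕ
  | [], c => [c]
  | a :: t, c => c :: nodes t (c + a)

lemma nodes_length (s : List ℕ) (c : ℕ) : (nodes s c).length = s.length + 1 := by
  induction s generalizing c with
  | nil => rfl
  | cons a t ih => simp [nodes, ih]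

lemma self_mem_nodes (s : List ℕ) (c : ℕ) : c ∈ nodes s c := by
  cases s <;> simp [nodes]

lemma nodes_add (s : List ℕ) (c d : ℕ) :
    nodes s (c + d) = (nodes s c).map (· + d) := by
  induction s generalizing c with
  | nil => rfl
  | cons a t ih =>
    simp only [nodes, List.map]
    rw [show c + d + a = (c + a) + d by ring, ih]

lemma occursAt_nodes_coprime {N : ℕ} {s : List ℕ} {c : ℕ} (h : OccursAt N s c) :
    ∀ v ∈ nodes s c, Nat.Coprime v N := by
  induction s generalizing c with
  | nil => simpa [nodes, OccursAt] using h
  | cons a t ih =>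
    obtain ⟨h1, h2, h3⟩ := h
    intro v hv
    rcases List.mem_cons.mp hv with rfl | hv
    · exact h1
    · exact ih h3 v hv

lemma occursAt_shift {N : ℕ} {s : List ℕ} {c : ℕ} (h : OccursAt N s c) (t : ℕ) :
    OccursAt N s (c + t * N) := by
  induction s generalizing c with
  | nil => exact (Nat.coprime_add_mul_right_left c N t).mpr h
  | cons a l ih =>
    obtain ⟨h1, h2, h3⟩ := h
    refine ⟨(Nat.coprime_add_mul_right_left c N t).mpr h1, ?_, ?_⟩
    · intro m hm1 hm2 hcm
      obtain ⟨m', rfl⟩ : ∃ m', m = m' + t * N := ⟨m - t * N, by omega⟩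
      exact h2 m' (by omega) (by omega) ((Nat.coprime_add_mul_right_left m' N t).mp hcm)
    · have := ih h3
      rwa [show c + a + t * N = c + t * N + a by ring] at this

lemma occursAt_lift {N M : ℕ} (hNM : N ∣ M) {s : List ℕ} {c : ℕ}
    (h : OccursAt N s c) (hcop : ∀ v ∈ nodes s c, Nat.Coprime v M) :
    OccursAt M s c := by
  induction s generalizing c with
  | nil => exact hcop c (self_mem_nodes _ _)
  | cons a t ih =>
    obtain ⟨h1, h2, h3⟩ := h
    refine ⟨hcop c (self_mem_nodes _ _), ?_, ?_⟩
    · intro m hm1 hm2 hcm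
      exact h2 m hm1 hm2 (Nat.Coprime.coprime_dvd_right hNM hcm)
    · exact ih h3 (fun v hv => hcop v (by simp [nodes, hv]))

open Classical in
lemma Ncount_eq_card (k : ℕ) (s : List ℕ) :
    Ncount k s = ((Finset.Icc 1 (primor k)).filter (fun c => OccursAt (primor k) s c)).card := by
  rw [Ncount, ← Set.ncard_coe_finset]
  congr 1
  ext c
  simp [Finset.mem_filter, Finset.mem_Icc, and_assoc]

theorem stmt_15 (k : ℕ) (hk : 2 ≤ k) (s : List ℕ) (hj : 1 ≤ s.length)
    (hpos : ∀ a ∈ s, 0 < a) (hocc : Occurs (primor k) s)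
    (hsum : s.sum < 2 * nthPrime (k + 1)) :
    (nthPrime (k + 1) - (s.length + 1)) * Ncount k s ≤ Ncount (k + 1) s := by
  classical
  set p := Nat.nth Nat.Prime k with hp
  have hpth : nthPrime (k + 1) = p := rfl
  set P := primor k with hP
  have pp : p.Prime := Nat.prime_nth_prime k
  have hPpos : 0 < P := Finset.prod_pos fun i _ => (Nat.prime_nth_prime i).pos
  have hsucc : primor (k + 1) = P * p := Finset.prod_range_succ _ _
  have hPnd : ¬ p ∣ P := by
    intro hd
    obtain ⟨i, hi, hdi⟩ := pp.prime.exists_mem_finset_dvd hd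
    have : p = Nat.nth Nat.Prime i :=
      (Nat.prime_dvd_prime_iff_eq pp (Nat.prime_nth_prime i)).mp hdi
    have hlt : Nat.nth Nat.Prime i < p :=
      (Nat.nth_lt_nth Nat.infinite_setOf_prime).mpr (Finset.mem_range.mp hi)
    omega
  have hPp : Nat.Coprime P p := (pp.coprime_iff_not_dvd.mpr hPnd).symm
  set F1 := (Finset.Icc 1 P).filter (fun c => OccursAt P s c) with hF1
  set F2 := (Finset.Icc 1 (P * p)).filter (fun c => OccursAt (P * p) s c) with hF2
  set G := fun c => (Finset.range p).filter (fun t => ∀ v ∈ nodes s c, ¬ p ∣ v + t * P)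
    with hG
  -- count of good t for each c
  have hGcard : ∀ c, p - (s.length + 1) ≤ (G c).card := by
    intro c
    have hsplit := Finset.card_filter_add_card_filter_not
      (s := Finset.range p) (p := fun t => ∀ v ∈ nodes s c, ¬ p ∣ v + t * P)
    have hbad : ((Finset.range p).filter
        (fun t => ¬ ∀ v ∈ nodes s c, ¬ p ∣ v + t * P)).card ≤ s.length + 1 := by
      have hsub : (Finset.range p).filter (fun t => ¬ ∀ v ∈ nodes s c, ¬ p ∣ v + t * P)
          ⊆ (nodes s c).toFinset.biUnion
            (fun v => (Finset.range p).filter (fun t => p ∣ v + t * P)) := by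
        intro t ht
        simp only [Finset.mem_filter, Finset.mem_range] at ht
        push_neg at ht
        obtain ⟨htp, v, hv, hdv⟩ := ht
        exact Finset.mem_biUnion.mpr ⟨v, List.mem_toFinset.mpr hv,
          Finset.mem_filter.mpr ⟨Finset.mem_range.mpr htp, hdv⟩⟩
      calc _ ≤ _ := Finset.card_le_card hsub
        _ ≤ ∑ v ∈ (nodes s c).toFinset,
              ((Finset.range p).filter (fun t => p ∣ v + t * P)).card :=
            Finset.card_biUnion_le
        _ ≤ ∑ _v ∈ (nodes s c).toFinset, 1 := by
            refine Finset.sum_le_sum fun v _ => ?_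
            refine Finset.card_le_one.mpr fun t1 h1 t2 h2 => ?_
            simp only [Finset.mem_filter, Finset.mem_range] at h1 h2
            have e1 : v + t1 * P ≡ 0 [MOD p] := (Nat.modEq_zero_iff_dvd).mpr h1.2
            have e2 : v + t2 * P ≡ 0 [MOD p] := (Nat.modEq_zero_iff_dvd).mpr h2.2
            have e3 : t1 * P ≡ t2 * P [MOD p] :=
              Nat.ModEq.add_left_cancel' v (e1.trans e2.symm)
            have e4 : t1 ≡ t2 [MOD p] := e3.cancel_right_of_coprime hPp.symm
            have := e4.eq_of_lt_of_lt h1.1 h2.1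
            exact this
        _ = (nodes s c).toFinset.card := by simp
        _ ≤ (nodes s c).length := (nodes s c).toFinset_card_le
        _ = s.length + 1 := nodes_length s c
    rw [Finset.card_range] at hsplit
    simp only [hG]
    omega
  -- the shifted copies belong to F2
  have hmem : ∀ c ∈ F1, ∀ t ∈ G c, c + t * P ∈ F2 := by
    intro c hc t ht
    simp only [hF1, Finset.mem_filter, Finset.mem_Icc] at hc
    simp only [hG, Finset.mem_filter, Finset.mem_range] at ht
    obtain ⟨⟨hc1, hc2⟩, hocc'⟩ := hc
    obtain ⟨htp, hnd⟩ := ht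
    refine Finset.mem_filter.mpr ⟨Finset.mem_Icc.mpr ⟨by omega, ?_⟩, ?_⟩
    · calc c + t * P ≤ P + t * P := by omega
        _ = (t + 1) * P := by ring
        _ ≤ p * P := Nat.mul_le_mul_right P (by omega)
        _ = P * p := Nat.mul_comm _ _
    · refine occursAt_lift ⟨p, rfl⟩ (occursAt_shift hocc' t) ?_
      intro v hv
      rw [nodes_add] at hv
      obtain ⟨w, hw, rfl⟩ := List.mem_map.mp hv
      have hwP : Nat.Coprime w P := occursAt_nodes_coprime hocc' w hw
      exact Nat.Coprime.mul_right ((Nat.coprime_add_mul_right_left w P t).mpr hwP)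
        ((pp.coprime_iff_not_dvd.mpr (hnd w hw)).symm)
  -- injectivity of (c, t) ↦ c + t * P
  have hinj : ∀ c1 ∈ F1, ∀ c2 ∈ F1, ∀ t1 ∈ G c1, ∀ t2 ∈ G c2,
      c1 + t1 * P = c2 + t2 * P → c1 = c2 ∧ t1 = t2 := by
    intro c1 hc1 c2 hc2 t1 _ t2 _ he
    have h1 : 1 ≤ c1 ∧ c1 ≤ P := Finset.mem_Icc.mp (Finset.mem_filter.mp hc1).1
    have h2 : 1 ≤ c2 ∧ c2 ≤ P := Finset.mem_Icc.mp (Finset.mem_filter.mp hc2).1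
    rcases Nat.le_total t1 t2 with hle | hle
    · obtain ⟨d, rfl⟩ := Nat.exists_eq_add_of_le hle
      rw [add_mul] at he
      rcases Nat.eq_zero_or_pos d with rfl | hd
      · simp at he ⊢; omega
      · exfalso
        have hdP : P ≤ d * P := Nat.le_mul_of_pos_left P hd
        have : c1 = c2 + d * P := by omega
        omega
    · obtain ⟨d, rfl⟩ := Nat.exists_eq_add_of_le hle
      rw [add_mul] at he
      rcases Nat.eq_zero_or_pos d with rfl | hd
      · simp at he ⊢; omega
      · exfalso
        have hdP : P ≤ d * P := Nat.le_mul_of_pos_left P hd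
        have : c2 = c1 + d * P := by omega
        omega
  -- the image finset
  set E := F1.biUnion (fun c => (G c).image (fun t => c + t * P)) with hE
  have hEsub : E ⊆ F2 := by
    intro x hx
    obtain ⟨c, hc, hx⟩ := Finset.mem_biUnion.mp hx
    obtain ⟨t, ht, rfl⟩ := Finset.mem_image.mp hx
    exact hmem c hc t ht
  have hEcard : E.card = ∑ c ∈ F1, (G c).card := by
    rw [hE, Finset.card_biUnion]
    · refine Finset.sum_congr rfl fun c hc => ?_
      exact Finset.card_image_of_injOn fun t1 ht1 t2 ht2 h =>
        (hinj c hc c hc t1 ht1 t2 ht2 h).2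
    · intro c1 hc1 c2 hc2 hne
      refine Finset.disjoint_left.mpr fun x hx1 hx2 => hne ?_
      obtain ⟨t1, ht1, rfl⟩ := Finset.mem_image.mp hx1
      obtain ⟨t2, ht2, he⟩ := Finset.mem_image.mp hx2
      exact (hinj c1 hc1 c2 hc2 t1 ht1 t2 ht2 he.symm).1
  have hfinal : (p - (s.length + 1)) * F1.card ≤ F2.card := by
    calc (p - (s.length + 1)) * F1.card = F1.card * (p - (s.length + 1)) := Nat.mul_comm _ _
      _ ≤ ∑ c ∈ F1, (G c).card := by
          simpa using Finset.card_nsmul_le_sum F1 (fun c => (G c).card) _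
            (fun c _ => hGcard c)
      _ = E.card := hEcard.symm
      _ ≤ F2.card := Finset.card_le_card hEsub
  rw [hpth, Ncount_eq_card, Ncount_eq_card, ← hP, hsucc]
  convert hfinal using 3
end

section
/- Let m ≥ 2 and let b_1 < b_2 < ⋯ < b_m be integers. If there are infinitely many integers x such that x + b_1, x + b_2, …, x + b_m are all prime, then there exists a prime p with 2·p > b_m − b_1 such that the sequence of differences s_b = (b_2 − b_1, b_3 − b_2, …, b_m − b_{m−1}) occurs in the cycle of gaps Δ(p). (This is the unconditional direction of the equivalence between Hardy and Littlewood's prime k-tuple conjecture and its formulation in terms of constellations.) -/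
/-!
Let `S = b m - b 1` and `K = 2 S + 1`, and fix `x` with every `x + b j` a prime exceeding
`nth Nat.Prime K`, so that no `x + b j` is divisible by one of the first `K` primes. By the Chinese
remainder theorem pick `c` with `c ≡ x + b 1` modulo most of these primes, but for every offset
`0 < t < S` which is not of the form `b j - b 1` spend the prime `nth Nat.Prime (S + t) > S` on
forcing it to divide `c + t`. Since it exceeds `S`, this prime divides no `c + (b j - b 1)`. Hence
the numbers `c + (b j - b 1)` are exactly the integers in `[c, c + S]` coprime to the primorial,
i.e. the gaps of `b` occur in the cycle of gaps at `c`.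
-/

open Nat

theorem coprime_primor_iff {n K : ℕ} :
    n.Coprime (primor K) ↔ ∀ i < K, ¬ nth Nat.Prime i ∣ n := by
  simp only [primor, Nat.coprime_prod_right_iff, Finset.mem_range]
  exact forall₂_congr fun i _ => Nat.coprime_comm.trans (prime_nth_prime i).coprime_iff_not_dvd

theorem exists_pos_forall_nth_prime_dvd_sub (K : ℕ) (r : ℕ → ℤ) :
    ∃ c : ℕ, 0 < c ∧ ∀ i < K, (nth Nat.Prime i : ℤ) ∣ c - r i := by
  have hcop : Pairwise (Function.onFun IsCoprime
      fun i : Fin K => Ideal.span {(nth Nat.Prime i : ℤ)}) :=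
    fun i j hij => (Ideal.isCoprime_span_singleton_iff _ _).mpr <| Nat.isCoprime_iff_coprime.mpr <|
      (coprime_primes (prime_nth_prime i) (prime_nth_prime j)).mpr
        ((nth_injective infinite_setOfPred_prime).ne (Fin.val_injective.ne hij))
  obtain ⟨c₀, hc₀⟩ := Ideal.exists_forall_sub_mem_ideal hcop fun i => r i
  have hprimor : (0 : ℤ) < primor K := by
    exact_mod_cast Finset.prod_pos fun i _ => (prime_nth_prime i).pos
  -- shifting by a multiple of the primorial keeps every congruence and makes `c₀` positive
  have hpos : 0 < c₀ + primor K * (|c₀| + 1) := by nlinarith [le_abs_self c₀, neg_abs_le c₀]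
  refine ⟨(c₀ + primor K * (|c₀| + 1)).toNat, Int.lt_toNat.mpr hpos, fun i hi => ?_⟩
  have hdvd : (nth Nat.Prime i : ℤ) ∣ primor K :=
    Int.natCast_dvd_natCast.mpr (Finset.dvd_prod_of_mem _ (Finset.mem_range.mpr hi))
  rw [Int.toNat_of_nonneg hpos.le, add_sub_right_comm]
  exact dvd_add (Ideal.mem_span_singleton.mp (hc₀ ⟨i, hi⟩)) (dvd_mul_of_dvd_left hdvd _)

theorem occursAt_of_forall {N : ℕ} {s : List ℕ} {c : ℕ}
    (hmem : ∀ k ≤ s.length, (c + (s.take k).sum).Coprime N)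
    (hgap : ∀ t < s.sum, (∀ k ≤ s.length, (s.take k).sum ≠ t) → ¬ (c + t).Coprime N) :
    OccursAt N s c := by
  induction s generalizing c with
  | nil => exact hmem 0 (zero_le _)
  | cons a s ih =>
    refine ⟨by simpa using hmem 0 (zero_le _), fun x hcx hxa => ?_,
      ih (fun k hk => ?_) fun t ht hne => ?_⟩
    · obtain ⟨t, rfl⟩ := Nat.exists_eq_add_of_le hcx.le
      refine hgap t (by simp; omega) fun k _ => ?_
      cases k <;> simp [List.take_succ_cons] <;> omega
    · simpa [List.take_succ_cons, add_assoc] using hmem (k + 1) (by simpa using hk)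
    · have ht0 : t ≠ 0 := fun h => hne 0 (zero_le _) (by simp [h])
      rw [add_assoc]
      refine hgap _ (by simp; omega) fun k hk => ?_
      cases k with
      | zero => simp; omega
      | succ k => simpa [List.take_succ_cons] using hne k (by simpa using hk)

theorem exists_occursAt_primor (s : List ℕ) {K : ℕ} (hK : 2 * s.sum ≤ K) (y : ℤ)
    (hy : ∀ i < K, ∀ k ≤ s.length, ¬ (nth Nat.Prime i : ℤ) ∣ y + (s.take k).sum) :
    ∃ c, 1 ≤ c ∧ OccursAt (primor K) s c := by
  classical
  set S := s.sum
  let IsGap (t : ℕ) : Prop := t < S ∧ ∀ k ≤ s.length, (s.take k).sum ≠ t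
  obtain ⟨c, hc, hcr⟩ := exists_pos_forall_nth_prime_dvd_sub K
    fun i => if S ≤ i ∧ IsGap (i - S) then -((i - S : ℕ) : ℤ) else y
  refine ⟨c, hc, occursAt_of_forall (fun k hk => ?_) fun t ht hne => ?_⟩
  · refine coprime_primor_iff.mpr fun i hi hdvd => ?_
    replace hdvd : (nth Nat.Prime i : ℤ) ∣ c + ((s.take k).sum : ℕ) := by
      rw [← Nat.cast_add]; exact Int.natCast_dvd_natCast.mpr hdvd
    have hdiff := dvd_sub hdvd (hcr i hi)
    split_ifs at hdiff with hgap
    · have hsum : (s.take k).sum ≤ S := (List.take_sublist k s).sum_le_sum fun _ _ => zero_le _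
      have hp := add_two_le_nth_prime i
      have := Int.eq_zero_of_abs_lt_dvd hdiff (abs_sub_lt_iff.mpr ⟨by omega, by omega⟩)
      exact hgap.2.2 k hk (by omega)
    · exact hy i hi k hk (by rwa [show (c : ℤ) + ((s.take k).sum : ℕ) - (c - y)
        = y + ((s.take k).sum : ℕ) by ring] at hdiff)
  · have hi : S + t < K := by omega
    have hgap : S ≤ S + t ∧ IsGap (S + t - S) := by simpa using ⟨ht, hne⟩
    have hcr := hcr (S + t) hi
    rw [if_pos hgap] at hcr
    refine fun hcop => coprime_primor_iff.mp hcop (S + t) hi ?_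
    exact_mod_cast (show ((c + t : ℕ) : ℤ) = c - -((S + t - S : ℕ) : ℤ) by push_cast; omega) ▸ hcr

theorem sum_take_map_range_toNat_sub (b : ℕ → ℤ) {n k : ℕ}
    (hb : ∀ i < n, b (i + 1) ≤ b (i + 2)) (hk : k ≤ n) :
    ((((List.range n).map fun i => (b (i + 2) - b (i + 1)).toNat).take k).sum : ℤ)
      = b (k + 1) - b 1 := by
  rw [← List.map_take, List.take_range, min_eq_left hk]
  induction k with
  | zero => simp
  | succ k ih =>
    rw [List.sum_range_succ, Nat.cast_add, ih (by omega),
      Int.toNat_of_nonneg (sub_nonneg.mpr (hb k (by omega)))]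
    ring

theorem Set.Infinite.exists_forall_lt_natAbs_add {s : Set ℤ} (hs : s.Infinite) (B : Finset ℤ)
    (M : ℕ) : ∃ x ∈ s, ∀ b ∈ B, M < (x + b).natAbs := by
  obtain ⟨x, hx, hxB⟩ := hs.exists_notMem_finite
    (B.finite_toSet.biUnion fun b _ => Set.finite_Icc (-M - b) (M - b))
  refine ⟨x, hx, fun b hb => not_le.mp fun hle => hxB ?_⟩
  exact Set.mem_biUnion hb (Set.mem_Icc.mpr ⟨by omega, by omega⟩)

theorem not_natCast_dvd_of_lt_natAbs {p : ℕ} (hp : p.Prime) {z : ℤ} (hz : Prime z)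
    (hlt : p < z.natAbs) : ¬ (p : ℤ) ∣ z := fun hdvd =>
  hlt.ne ((Nat.prime_dvd_prime_iff_eq hp (Int.prime_iff_natAbs_prime.mp hz)).mp
    (Int.natCast_dvd.mp hdvd))

theorem stmt_17 (m : ℕ) (hm : 2 ≤ m) (b : ℕ → ℤ)
    (hmono : ∀ i : ℕ, 1 ≤ i → i < m → b i < b (i + 1))
    (hinf : {x : ℤ | ∀ i : ℕ, 1 ≤ i → i ≤ m → Prime (x + b i)}.Infinite) :
    ∃ K : ℕ, 1 ≤ K ∧ b m - b 1 < 2 * (nthPrime K : ℤ) ∧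
      Occurs (primor K)
        ((List.range (m - 1)).map (fun i => (b (i + 2) - b (i + 1)).toNat)) := by
  set s := (List.range (m - 1)).map fun i => (b (i + 2) - b (i + 1)).toNat
  have hlen : s.length = m - 1 := by simp [s]
  have hsum : ∀ k ≤ s.length, ((s.take k).sum : ℤ) = b (k + 1) - b 1 := fun k hk =>
    sum_take_map_range_toNat_sub b (fun i hi => (hmono (i + 1) (by omega) (by omega)).le)
      (hlen ▸ hk)
  have hspan : (s.sum : ℤ) = b m - b 1 := by
    have := hsum s.length le_rfl
    rwa [List.take_length, hlen, Nat.sub_add_cancel (by omega)] at this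
  set K := 2 * s.sum + 1
  obtain ⟨x, hx, hbig⟩ := hinf.exists_forall_lt_natAbs_add ((Finset.Icc 1 m).image b)
    (nth Nat.Prime K)
  obtain ⟨c, hc, hocc⟩ := exists_occursAt_primor s (le_succ _) (x + b 1) fun i hi k hk => by
    rw [add_assoc, hsum k hk, add_sub_cancel]
    exact not_natCast_dvd_of_lt_natAbs (prime_nth_prime i) (hx (k + 1) (by omega) (by omega))
      ((nth_strictMono infinite_setOfPred_prime hi).trans
        (hbig _ (Finset.mem_image_of_mem b (Finset.mem_Icc.mpr ⟨by omega, by omega⟩))))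
  refine ⟨K, le_add_self, ?_, c, hc, hocc⟩
  have := add_two_le_nth_prime (K - 1)
  simp only [nthPrime]
  omega
end

section
/- Assume Hypothesis (H). Then for every k ≥ 1 there are infinitely many indices j such that g_j < g_{j+1} < ⋯ < g_{j+k}, i.e., there are infinitely many runs of k+1 strictly increasing consecutive gaps between consecutive primes. (This answers the superlinearity question of Erdős and Turán affirmatively.) -/
/-- `gap n = g_n = p_{n+1} - p_n`, the n-th gap between consecutive primes. -/
noncomputable def gap (n : ℕ) : ℕ := nthPrime (n + 1) - nthPrime n

/-- Hypothesis (H): every sufficiently small constellation occurring in a cycle of gaps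
`Δ(p_k)` occurs infinitely often as a constellation among the prime numbers. -/
def HypothesisH : Prop :=
  ∀ k : ℕ, 1 ≤ k → ∀ s : List ℕ, (∀ a ∈ s, 0 < a) → Occurs (primor k) s →
    s.length < nthPrime (k + 1) - 1 → s.sum < 2 * nthPrime (k + 1) →
    ∀ N : ℕ, ∃ n : ℕ, N ≤ n ∧ ∀ i : ℕ, i < s.length → gap (n + i) = s.getD i 0


lemma exists_avoid {p : ℕ} (hp : p.Prime) : ∃ a : ℕ, ∀ x : ℕ, ¬ p ∣ a + x * (x + 1) := by
  haveI : Fact p.Prime := ⟨hp⟩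
  have hni : ¬ Function.Injective (fun z : ZMod p => z * (z + 1)) := by
    intro hinj
    have h : (fun z : ZMod p => z * (z + 1)) 0 = (fun z : ZMod p => z * (z + 1)) (-1) := by
      simp
    have h0 : (0 : ZMod p) = -1 := hinj h
    have h1 : (1 : ZMod p) = 0 := by linear_combination h0
    exact one_ne_zero h1
  have hns : ¬ Function.Surjective (fun z : ZMod p => z * (z + 1)) :=
    fun hs => hni (Finite.injective_iff_surjective.mpr hs)
  simp only [Function.Surjective, not_forall, not_exists] at hns
  obtain ⟨y, hy⟩ := hns
  refine ⟨(-y : ZMod p).val, fun x hdvd => ?_⟩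
  have h0 : ((((-y : ZMod p)).val + x * (x + 1) : ℕ) : ZMod p) = 0 :=
    (ZMod.natCast_eq_zero_iff _ _).mpr hdvd
  push_cast at h0
  rw [ZMod.natCast_rightInverse (-y)] at h0
  exact hy (x : ZMod p) (by linear_combination h0)



lemma res_exists (K M : ℕ) (hM : K * (K + 1) ≤ M) (j : ℕ) :
    ∃ a : ℕ, ∀ c : ℕ, c ≡ a [MOD Nat.nth Nat.Prime j] →
      (∀ i ≤ K, ¬ Nat.nth Nat.Prime j ∣ c + i * (i + 1)) ∧
      (∀ u, j = M + u → 0 < u → u < M → (∀ i ≤ K, u ≠ i * (i + 1)) →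
        Nat.nth Nat.Prime j ∣ c + u) := by
  set p := Nat.nth Nat.Prime j with hpdef
  have hp : p.Prime := Nat.prime_nth_prime j
  have hpsz : j + 2 ≤ p := Nat.add_two_le_nth_prime j
  by_cases hb : M ≤ j ∧ 0 < j - M ∧ j - M < M ∧ (∀ i ≤ K, j - M ≠ i * (i + 1))
  · obtain ⟨hbM, hb1, hb2, hb3⟩ := hb
    set u := j - M with hudef
    refine ⟨p - u % p, fun c hc => ?_⟩
    have hpu : p ∣ c + u := by
      have h1 : c + u ≡ (p - u % p) + u % p [MOD p] := hc.add (Nat.mod_modEq u p).symm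
      have h2 : (p - u % p) + u % p = p :=
        Nat.sub_add_cancel (le_of_lt (Nat.mod_lt _ hp.pos))
      rw [h2] at h1
      have h3 : c + u ≡ 0 [MOD p] := h1.trans ((Nat.modEq_zero_iff_dvd).mpr dvd_rfl)
      exact Nat.modEq_zero_iff_dvd.mp h3
    constructor
    · intro i hi hdvd
      have ht : i * (i + 1) ≤ M := le_trans (Nat.mul_le_mul (by omega) (by omega)) hM
      have hne : u ≠ i * (i + 1) := hb3 i hi
      have hplarge : M + u + 2 ≤ p := by omega
      rcases lt_or_gt_of_ne hne with h | h
      · -- u < i*(i+1)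
        have hd : p ∣ i * (i + 1) - u := by
          have h5 := Nat.dvd_sub hdvd hpu
          have he : c + i * (i + 1) - (c + u) = i * (i + 1) - u := by omega
          rwa [he] at h5
        have := Nat.le_of_dvd (by omega) hd
        omega
      · have hd : p ∣ u - i * (i + 1) := by
          have h5 := Nat.dvd_sub hpu hdvd
          have he : c + u - (c + i * (i + 1)) = u - i * (i + 1) := by omega
          rwa [he] at h5
        have := Nat.le_of_dvd (by omega) hd
        omega
    · intro u' hj h1 h2 h3
      have : u' = u := by omega
      rw [this]; exact hpu
  · obtain ⟨a, ha⟩ := exists_avoid hp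
    refine ⟨a, fun c hc => ⟨fun i _ hdvd => ?_, fun u hj h1 h2 h3 => ?_⟩⟩
    · have h0 : a + i * (i + 1) ≡ c + i * (i + 1) [MOD p] := (hc.symm).add_right _
      have h1 : c + i * (i + 1) ≡ 0 [MOD p] := Nat.modEq_zero_iff_dvd.mpr hdvd
      exact ha i (Nat.modEq_zero_iff_dvd.mp (h0.trans h1))
    · exact absurd ⟨by omega, by omega, by omega, fun i hi => by
        have := h3 i hi; omega⟩ hb


lemma crt_all (m : ℕ) (a : ℕ → ℕ) :
    ∃ c : ℕ, ∀ j < m, c ≡ a j [MOD Nat.nth Nat.Prime j] := by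
  have hinj : Function.Injective (Nat.nth Nat.Prime) :=
    (Nat.nth_strictMono Nat.infinite_setOf_prime).injective
  obtain ⟨c, hc⟩ := Nat.chineseRemainderOfFinset a (fun j => Nat.nth Nat.Prime j)
    (Finset.range m)
    (fun i _ => (Nat.prime_nth_prime i).pos.ne')
    (by
      intro i _ j _ hij
      simp only [Function.onFun]
      exact (Nat.coprime_primes (Nat.prime_nth_prime i) (Nat.prime_nth_prime j)).mpr
        (fun h => hij (hinj h)))
  exact ⟨c, fun j hj => hc j (Finset.mem_range.mpr hj)⟩

theorem stmt_18 (hH : HypothesisH) (k : ℕ) (hk : 1 ≤ k) :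
    ∀ N : ℕ, ∃ j : ℕ, N ≤ j ∧ ∀ i : ℕ, i < k → gap (j + i) < gap (j + i + 1) := by
  intro N0
  set K := k + 1 with hK
  set M := K * (K + 1) with hMdef
  set m := 2 * M + 1 with hmdef
  have hKM : K ≤ M := Nat.le_mul_of_pos_right K (by omega)
  have hres := fun j => res_exists K M (le_refl M) j
  obtain ⟨c0, hc0⟩ := crt_all m (fun j => Classical.choose (hres j))
  set Np := primor m with hNp
  have hNpprod : Np = ∏ j ∈ Finset.range m, Nat.nth Nat.Prime j := rfl
  have hNppos : 1 ≤ Np := by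
    rw [hNpprod]
    exact Finset.prod_pos (fun j _ => (Nat.prime_nth_prime j).pos)
  set c := c0 + Np with hcdef
  have hc : ∀ j < m, c ≡ Classical.choose (hres j) [MOD Nat.nth Nat.Prime j] := by
    intro j hj
    have hdvd : Nat.nth Nat.Prime j ∣ Np := by
      rw [hNpprod]; exact Finset.dvd_prod_of_mem _ (Finset.mem_range.mpr hj)
    have h1 : Np ≡ 0 [MOD Nat.nth Nat.Prime j] := Nat.modEq_zero_iff_dvd.mpr hdvd
    have h2 : c0 + Np ≡ Classical.choose (hres j) + 0 [MOD Nat.nth Nat.Prime j] :=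
      (hc0 j hj).add h1
    simpa using h2
  have hA : ∀ j < m, ∀ i ≤ K, ¬ Nat.nth Nat.Prime j ∣ c + i * (i + 1) :=
    fun j hj i hi => (Classical.choose_spec (hres j) c (hc j hj)).1 i hi
  have hC : ∀ u, 0 < u → u < M → (∀ i ≤ K, u ≠ i * (i + 1)) →
      Nat.nth Nat.Prime (M + u) ∣ c + u :=
    fun u h1 h2 h3 =>
      (Classical.choose_spec (hres (M + u)) c (hc (M + u) (by omega))).2 u rfl h1 h2 h3
  -- good positions are coprime to Np
  have hg : ∀ i ≤ K, Nat.Coprime (c + i * (i + 1)) Np := by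
    intro i hi
    rw [hNpprod]
    refine Nat.Coprime.prod_right (fun j hj => ?_)
    exact Nat.coprime_comm.mp
      (((Nat.prime_nth_prime j).coprime_iff_not_dvd).mpr
        (hA j (Finset.mem_range.mp hj) i hi))
  -- bad positions are not coprime to Np
  have hbad : ∀ u, 0 < u → u < M → (∀ i ≤ K, u ≠ i * (i + 1)) →
      ¬ Nat.Coprime (c + u) Np := by
    intro u h1 h2 h3 hco
    have hd1 : Nat.nth Nat.Prime (M + u) ∣ c + u := hC u h1 h2 h3
    have hd2 : Nat.nth Nat.Prime (M + u) ∣ Np := by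
      rw [hNpprod]; exact Finset.dvd_prod_of_mem _ (Finset.mem_range.mpr (by omega))
    have hd3 : Nat.nth Nat.Prime (M + u) ∣ 1 := hco ▸ Nat.dvd_gcd hd1 hd2
    exact (Nat.prime_nth_prime (M + u)).ne_one (Nat.dvd_one.mp hd3)
  -- the occurrence, by downward induction
  have hocc : ∀ r i, i + r = K →
      OccursAt Np ((List.range r).map (fun l => 2 * (i + 1 + l))) (c + i * (i + 1)) := by
    intro r
    induction r with
    | zero =>
      intro i hi
      simpa [OccursAt] using hg i (by omega)
    | succ r ih =>
      intro i hi
      rw [List.range_succ_eq_map, List.map_cons, List.map_map]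
      refine ⟨hg i (by omega), ?_, ?_⟩
      · intro w hw1 hw2
        have hwc : c + i * (i + 1) < w := hw1
        set u := w - c with hu
        have hw : w = c + u := by omega
        have hti : i * (i + 1) < u := by omega
        have htsu : u < (i + 1) * (i + 2) := by
          have : w < c + i * (i + 1) + 2 * (i + 1) := hw2
          nlinarith [hw]
        have hiK : i + 1 ≤ K := by omega
        rw [hw]
        refine hbad u (by omega) ?_ ?_
        · calc u < (i + 1) * (i + 2) := htsu
            _ ≤ K * (K + 1) := Nat.mul_le_mul (by omega) (by omega)
        · intro l hl
          rcases le_or_gt l i with h | h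
          · have : l * (l + 1) ≤ i * (i + 1) := Nat.mul_le_mul (by omega) (by omega)
            omega
          · have : (i + 1) * (i + 2) ≤ l * (l + 1) := Nat.mul_le_mul (by omega) (by omega)
            omega
      · have heq : ((fun l => 2 * (i + 1 + l)) ∘ Nat.succ) = (fun l => 2 * ((i + 1) + 1 + l)) := by
          funext l
          simp [Function.comp]
          ring
        have hpt : c + i * (i + 1) + 2 * (i + 1 + 0) = c + (i + 1) * ((i + 1) + 1) := by ring
        rw [heq, hpt]
        exact ih (i + 1) (by omega)
  -- the constellation
  set s : List ℕ := (List.range K).map (fun l => 2 * (l + 1)) with hs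
  have hslen : s.length = K := by simp [hs]
  have hsget : ∀ i < K, s.getD i 0 = 2 * (i + 1) := by
    intro i hi
    rw [List.getD_eq_getElem _ _ (by simpa [hs] using hi)]
    simp [hs]
  have hOcc : Occurs Np s := by
    refine ⟨c, by omega, ?_⟩
    have h0 := hocc K 0 (by omega)
    have hl : (List.range K).map (fun l => 2 * (0 + 1 + l)) = s := by
      rw [hs]
      exact List.map_congr_left (fun a _ => by ring)
    rw [hl] at h0
    simpa using h0
  have hP : m + 2 ≤ Nat.nth Nat.Prime m := Nat.add_two_le_nth_prime m
  have hnth : nthPrime (m + 1) = Nat.nth Nat.Prime m := by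
    simp [nthPrime]
  have hpos : ∀ a ∈ s, 0 < a := by
    intro a ha
    rw [hs] at ha
    simp only [List.mem_map, List.mem_range] at ha
    obtain ⟨l, _, rfl⟩ := ha
    omega
  have hlen : s.length < nthPrime (m + 1) - 1 := by
    rw [hslen, hnth]; omega
  have hsum : s.sum < 2 * nthPrime (m + 1) := by
    have h1 : s.sum ≤ s.length • (2 * K) := by
      refine List.sum_le_card_nsmul s (2 * K) ?_
      intro x hx
      rw [hs] at hx
      simp only [List.mem_map, List.mem_range] at hx
      obtain ⟨l, hl, rfl⟩ := hx
      omega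
    rw [hslen, smul_eq_mul] at h1
    have h2 : K * (2 * K) ≤ 2 * M := by rw [hMdef]; nlinarith
    rw [hnth]
    omega
  obtain ⟨n, hn, hgap⟩ := hH m (by omega) s hpos hOcc hlen hsum N0
  refine ⟨n, hn, ?_⟩
  intro i hi
  have g1 : gap (n + i) = 2 * (i + 1) := by
    rw [hgap i (by omega)]  -- i < s.length
    exact hsget i (by omega)
  have g2 : gap (n + i + 1) = 2 * (i + 2) := by
    have := hgap (i + 1) (by omega)
    rw [show n + (i + 1) = n + i + 1 by omega] at this
    rw [this]
    have := hsget (i + 1) (by omega)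
    rw [this]
  rw [g1, g2]
  omega
end
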